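/- Let (X,⊳) be a spindle and consider rack homology with ∂^R = ∂^{⊳₀} − ∂^⊳ (⊳₀ the trivial operation). The doubling map s(x_n,…,x_0) = (−1)^n (x_n, x_n, x_{n-1},…,x_0) commutes with the rack differential: ∂^R s(𝐱) = s(∂^R 𝐱) for every generator 𝐱 ∈ X^{n+1}. -/

import Mathlib

/-!
In `s 𝐱` the entry `x_n` stands twice at the front. Deleting the outer copy gives back `𝐱`, and
so does deleting the inner one, because the outer copy is then acted on by itself and `⊳` is
idempotent; these two faces carry opposite signs and cancel. Every other face of `s 𝐱` is the
doubling of the corresponding face of `𝐱`, with matching signs. So `∂ s = s ∂'`, where `∂'` lacks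
the face deleting `x_n`; that face does not involve the operation, so it cancels in
`∂^R = ∂^{⊳₀} − ∂^⊳`.
-/

def face {X : Type*} (op : X → X → X) {n : ℕ} (i : Fin (n+1)) (f : Fin (n+1) → X) :
    Fin n → X :=
  fun k => if (k : ℕ) < (i : ℕ) then f k.castSucc else op (f k.succ) (f i)

noncomputable def oneTermDiff {X : Type*} (R : Type*) [CommRing R] (op : X → X → X) (n : ℕ) :
    ((Fin (n+1) → X) →₀ R) →ₗ[R] ((Fin n → X) →₀ R) :=
  ∑ i : Fin (n+1), ((-1 : R) ^ (n - (i : ℕ))) • Finsupp.lmapDomain R R (face op i)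

/-- The rack differential `∂^R = ∂^{⊳₀} − ∂^⊳`, where `⊳₀` is the trivial operation. -/
noncomputable def rackDiff {X : Type} (R : Type) [CommRing R] (op : X → X → X) (n : ℕ) :
    ((Fin (n+1) → X) →₀ R) →ₗ[R] ((Fin n → X) →₀ R) :=
  oneTermDiff R (fun x (_ : X) => x) n - oneTermDiff R op n

/-- The doubling map `s(x_n,…,x_0) = (−1)^n (x_n,x_n,x_{n-1},…,x_0)`. -/
noncomputable def doublingR {X : Type} (R : Type) [CommRing R] (n : ℕ) :
    ((Fin (n+1) → X) →₀ R) →ₗ[R] ((Fin (n+2) → X) →₀ R) :=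
  Finsupp.lsum R fun f =>
    ((-1 : R) ^ n) • (Finsupp.lsingle (Fin.snoc f (f (Fin.last n))) : R →ₗ[R] _)

def dupLast {X : Type*} {n : ℕ} (f : Fin (n+1) → X) : Fin (n+2) → X :=
  Fin.snoc f (f (Fin.last n))

section Faces

variable {X : Type*} (op : X → X → X)

theorem face_last {n : ℕ} (f : Fin (n+1) → X) : face op (Fin.last n) f = Fin.init f := by
  funext k
  simp [face, Fin.init]

theorem face_castSucc_last_dupLast (hidem : ∀ x, op x x = x) {n : ℕ} (f : Fin (n+1) → X) :
    face op (Fin.last n).castSucc (dupLast f) = f := by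
  funext k
  refine Fin.lastCases ?_ (fun j => ?_) k
  · simp [face, dupLast, hidem]
  · simp [face, dupLast]

theorem face_castSucc_castSucc_dupLast {n : ℕ} (f : Fin (n+2) → X) (i : Fin (n+1)) :
    face op i.castSucc.castSucc (dupLast f) = dupLast (face op i.castSucc f) := by
  funext k
  refine Fin.lastCases ?_ (fun j => ?_) k
  · have hi : ¬ (n < (i : ℕ)) := by omega
    simp [face, dupLast, hi]
  · simp [face, dupLast, -Fin.castSucc_succ, Fin.succ_castSucc]

end Faces

section Chains

variable {X : Type} (R : Type) [CommRing R]

theorem oneTermDiff_single (op : X → X → X) (n : ℕ) (f : Fin (n+1) → X) (c : R) :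
    oneTermDiff R op n (Finsupp.single f c)
      = ∑ i : Fin (n+1), ((-1 : R) ^ (n - (i : ℕ))) • Finsupp.single (face op i f) c := by
  simp [oneTermDiff, Finsupp.mapDomain_single]

theorem doublingR_single (n : ℕ) (f : Fin (n+1) → X) (c : R) :
    doublingR R n (Finsupp.single f c) = ((-1 : R) ^ n) • Finsupp.single (dupLast f) c := by
  simp [doublingR, dupLast]

theorem oneTermDiff_single_dupLast {op : X → X → X} (hidem : ∀ x, op x x = x) (n : ℕ)
    (f : Fin (n+1) → X) (c : R) :
    oneTermDiff R op (n+1) (Finsupp.single (dupLast f) c)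
      = ∑ i : Fin n, ((-1 : R) ^ (n + 1 - (i : ℕ))) •
          Finsupp.single (face op i.castSucc.castSucc (dupLast f)) c := by
  rw [oneTermDiff_single, Fin.sum_univ_castSucc, Fin.sum_univ_castSucc,
    face_castSucc_last_dupLast op hidem, face_last, dupLast, Fin.init_snoc]
  simp

theorem neg_one_pow_doubling_sign {n i : ℕ} (hi : i ≤ n) :
    (-1 : R) ^ (n + 1) * (-1) ^ (n + 2 - i) = (-1) ^ (n + 1 - i) * (-1) ^ n := by
  obtain ⟨k, rfl⟩ := Nat.exists_eq_add_of_le hi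
  rw [show i + k + 2 - i = k + 2 by omega, show i + k + 1 - i = k + 1 by omega]
  ring

/-- `Fin.init f` is the last face of `f`, the one deleting `x_n`, for every `op`. -/
theorem oneTermDiff_doublingR_single {op : X → X → X} (hidem : ∀ x, op x x = x) (n : ℕ)
    (f : Fin (n+2) → X) (c : R) :
    oneTermDiff R op (n+2) (doublingR R (n+1) (Finsupp.single f c))
      = doublingR R n (oneTermDiff R op (n+1) (Finsupp.single f c)
          - Finsupp.single (Fin.init f) c) := by
  rw [doublingR_single, map_smul, oneTermDiff_single_dupLast R hidem, oneTermDiff_single,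
    Fin.sum_univ_castSucc (n := n + 1), face_last, Fin.val_last, Nat.sub_self, pow_zero, one_smul,
    add_sub_cancel_right, map_sum, Finset.smul_sum]
  refine Finset.sum_congr rfl fun i _ => ?_
  rw [face_castSucc_castSucc_dupLast, map_smul, doublingR_single, smul_smul, smul_smul,
    neg_one_pow_doubling_sign R (Nat.lt_succ_iff.mp i.isLt), Fin.val_castSucc]

theorem oneTermDiff_doublingR_zero_single {op : X → X → X} (hidem : ∀ x, op x x = x)
    (f : Fin 1 → X) (c : R) :
    oneTermDiff R op 1 (doublingR R 0 (Finsupp.single f c)) = 0 := by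
  rw [doublingR_single, map_smul, oneTermDiff_single_dupLast R hidem, Fin.sum_univ_zero,
    smul_zero]

end Chains

theorem doubling_commutes_with_rack_differential_general
    {X : Type} (R : Type) [CommRing R] (op : X → X → X)
    (hidem : ∀ x : X, op x x = x) :
    (∀ (n : ℕ) (f : Fin (n+2) → X),
      rackDiff R op (n+2) (doublingR R (n+1) (Finsupp.single f (1 : R)))
        = doublingR R n (rackDiff R op (n+1) (Finsupp.single f (1 : R))))
    ∧ (∀ f : Fin 1 → X,
      rackDiff R op 1 (doublingR R 0 (Finsupp.single f (1 : R))) = 0) := by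
  have htriv : ∀ x : X, (fun x (_ : X) => x) x x = x := fun _ => rfl
  refine ⟨fun n f => ?_, fun f => ?_⟩
  · rw [rackDiff, rackDiff, LinearMap.sub_apply, LinearMap.sub_apply,
      oneTermDiff_doublingR_single R htriv, oneTermDiff_doublingR_single R hidem, ← map_sub,
      sub_sub_sub_cancel_right]
  · rw [rackDiff, LinearMap.sub_apply, oneTermDiff_doublingR_zero_single R htriv,
      oneTermDiff_doublingR_zero_single R hidem, sub_zero]

/-- For a spindle `(X,⊳)` the doubling map commutes with the rack differential:
`∂^R(s 𝐱) = s(∂^R 𝐱)` for every generator `𝐱 ∈ X^{n+1}` (in degree `0`, where `∂^R`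
vanishes on `C_0`, this reads `∂^R(s 𝐱) = 0`). -/
theorem doubling_commutes_with_rack_differential
    {X : Type} (R : Type) [CommRing R] (op : X → X → X)
    (hidem : ∀ x : X, op x x = x)
    (hshelf : ∀ x y z : X, op (op x y) z = op (op x z) (op y z)) :
    (∀ (n : ℕ) (f : Fin (n+2) → X),
      rackDiff R op (n+2) (doublingR R (n+1) (Finsupp.single f (1 : R)))
        = doublingR R n (rackDiff R op (n+1) (Finsupp.single f (1 : R))))
    ∧ (∀ f : Fin 1 → X,
      rackDiff R op 1 (doublingR R 0 (Finsupp.single f (1 : R))) = 0) :=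
  doubling_commutes_with_rack_differential_general R op hidem
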